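/- Let H be a Hilbert space and let F, H₀ ∈ B(H) be such that [H₀, F], [H₀, F*], H₀(F² − 1), and H₀(F* − F) are all compact. Let C = φ((F+F*)/2) with φ the clamp function to [−1,1] applied by continuous functional calculus. Then H₀(C − F) and H₀(C² − 1) are compact, and [H₀, C] is compact. -/

import Mathlib

/-!
The argument works modulo any closed two-sided ideal `I` of a C⋆-algebra (here the compact
operators), with `h = H₀`, `f = F` and `a = (f + f⋆)/2`. Modulo `I`, `h` commutes with `a` and
`h (a² - 1) ≡ 0`.
Since the elements commuting with `h` modulo `I` form a closed subalgebra, `h` also commutes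
modulo `I` with every continuous function of `a`. The function `clamp t - t` vanishes wherever
`t² - 1` does and is dominated by `|t² - 1| / 2`, so it is a uniform limit of functions
`g(t) (t² - 1)` with `g` continuous; hence `h (clamp a - a) = lim ([h, g a] + g a h) (a² - 1)`
lies in `I`. The other two claims follow algebraically.
-/

noncomputable def unitClamp (t : ℝ) : ℝ := max (-1) (min t 1)

@[fun_prop]
lemma continuous_unitClamp : Continuous unitClamp :=
  continuous_const.max (continuous_id.min continuous_const)

lemma four_mul_sq_unitClamp_sub_le (t : ℝ) : 4 * (unitClamp t - t) ^ 2 ≤ (t ^ 2 - 1) ^ 2 := by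
  rcases le_total t (-1) with ht | ht
  · rw [unitClamp, min_eq_left (by linarith), max_eq_left ht]
    nlinarith
  rcases le_total t 1 with ht' | ht'
  · rw [unitClamp, min_eq_left ht', max_eq_right ht]
    nlinarith
  · rw [unitClamp, min_eq_right ht', max_eq_right (by norm_num)]
    nlinarith

lemma mul_sq_div_add_sq_le {s d ε : ℝ} (hε : 0 < ε) (hd : 4 * s ^ 2 ≤ d) :
    s * ε ^ 2 / (d + ε ^ 2) ≤ ε / 4 := by
  have hpos : 0 < d + ε ^ 2 := by nlinarith [sq_nonneg s]
  rw [div_le_div_iff₀ hpos (by norm_num)]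
  nlinarith [mul_nonneg hε.le (sq_nonneg (2 * s - ε)), mul_le_mul_of_nonneg_left hd hε.le]

/-- A regularisation of the quotient `(unitClamp t - t) / (t ^ 2 - 1)`, which is discontinuous
at `t = ± 1`. -/
noncomputable def unitClampRegQuot (ε t : ℝ) : ℝ :=
  (unitClamp t - t) * (t ^ 2 - 1) / ((t ^ 2 - 1) ^ 2 + ε ^ 2)

@[fun_prop]
lemma continuous_unitClampRegQuot {ε : ℝ} (hε : 0 < ε) : Continuous (unitClampRegQuot ε) :=
  Continuous.div (by fun_prop) (by fun_prop) fun t => by positivity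

lemma abs_unitClamp_sub_sub_unitClampRegQuot_le {ε : ℝ} (hε : 0 < ε) (t : ℝ) :
    |unitClamp t - t - unitClampRegQuot ε t * (t ^ 2 - 1)| ≤ ε / 4 := by
  have hpos : 0 < (t ^ 2 - 1) ^ 2 + ε ^ 2 := by positivity
  have hresidual : unitClamp t - t - unitClampRegQuot ε t * (t ^ 2 - 1)
      = (unitClamp t - t) * ε ^ 2 / ((t ^ 2 - 1) ^ 2 + ε ^ 2) := by
    rw [unitClampRegQuot]
    field_simp
    ring
  rw [hresidual, abs_div, abs_mul, abs_of_pos hpos, abs_of_pos (pow_pos hε 2)]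
  exact mul_sq_div_add_sq_le hε (by rw [sq_abs]; exact four_mul_sq_unitClamp_sub_le t)

namespace TwoSidedIdeal

section Ring

variable {A : Type*} [Ring A]

def essentialCommutant (R : Type*) [CommRing R] [Algebra R A] (I : TwoSidedIdeal A) (h : A) :
    Subalgebra R A where
  carrier := {x | h * x - x * h ∈ I}
  mul_mem' {x y} hx hy := by
    have : h * (x * y) - x * y * h = (h * x - x * h) * y + x * (h * y - y * h) := by noncomm_ring
    simpa only [Set.mem_ofPred_eq, this] using
      I.add_mem (I.mul_mem_right _ _ hx) (I.mul_mem_left _ _ hy)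
  add_mem' {x y} hx hy := by
    have : h * (x + y) - (x + y) * h = (h * x - x * h) + (h * y - y * h) := by noncomm_ring
    simpa only [Set.mem_ofPred_eq, this] using I.add_mem hx hy
  algebraMap_mem' r := by
    simpa only [Set.mem_ofPred_eq, Algebra.commutes, sub_self] using I.zero_mem

variable (R : Type*) [CommRing R] [Algebra R A] {I : TwoSidedIdeal A}

lemma mem_essentialCommutant {h x : A} :
    x ∈ I.essentialCommutant R h ↔ h * x - x * h ∈ I := Iff.rfl

lemma isClosed_essentialCommutant [TopologicalSpace A] [IsTopologicalRing A]
    (hI : IsClosed (I : Set A)) (h : A) : IsClosed (I.essentialCommutant R h : Set A) :=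
  hI.preimage (by fun_prop : Continuous fun x : A => h * x - x * h)

lemma mul_mul_self_sub_one_mem {h x y : A} (hy : h * y - y * h ∈ I) (hxy : h * (x - y) ∈ I)
    (hyy : h * (y * y - 1) ∈ I) : h * (x * x - 1) ∈ I := by
  have : h * (x * x - 1) = h * (x - y) * x + (h * y - y * h) * (x - y) + y * (h * (x - y))
      + h * (y * y - 1) := by noncomm_ring
  rw [this]
  exact I.add_mem (I.add_mem (I.add_mem (I.mul_mem_right _ _ hxy) (I.mul_mem_right _ _ hy))
    (I.mul_mem_left _ _ hxy)) hyy

end Ring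

end TwoSidedIdeal

section ClosedSubalgebra

variable {A : Type*} [Ring A] [StarRing A] [Algebra ℝ A] [TopologicalSpace A]
  [IsTopologicalRing A] [ContinuousStar A] [StarModule ℝ A]
  [ContinuousFunctionalCalculus ℝ A IsSelfAdjoint]

lemma cfc_mem_of_isClosed {S : Subalgebra ℝ A} (hS : IsClosed (S : Set A)) {a : A}
    (ha : IsSelfAdjoint a) (has : a ∈ S) (f : ℝ → ℝ) : cfc f a ∈ S := by
  have hadjoin : (StarAlgebra.adjoin ℝ {a} : Set A) ⊆ S := by
    rw [← StarSubalgebra.coe_toSubalgebra, StarAlgebra.adjoin_toSubalgebra,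
      SetLike.coe_subset_coe, Algebra.adjoin_le_iff]
    simp [Set.star_singleton, ha.star_eq, has]
  exact closure_minimal hadjoin hS (cfc_mem_elemental f a)

end ClosedSubalgebra

section CStarAlgebra

variable {A : Type*} [CStarAlgebra A]

lemma norm_cfc_unitClamp_sub_sub_le {a : A} (ha : IsSelfAdjoint a) {ε : ℝ} (hε : 0 < ε) :
    ‖cfc unitClamp a - a - cfc (unitClampRegQuot ε) a * (a * a - 1)‖ ≤ ε / 4 := by
  have hcfc : cfc unitClamp a - a - cfc (unitClampRegQuot ε) a * (a * a - 1)
      = cfc (fun t => unitClamp t - t - unitClampRegQuot ε t * (t ^ 2 - 1)) a := by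
    rw [cfc_sub _ _ a (by fun_prop) (by fun_prop), cfc_sub _ _ a, cfc_id' ℝ a,
      cfc_mul _ _ a (by fun_prop) (by fun_prop), cfc_sub _ _ a, cfc_pow_id a 2,
      cfc_const_one ℝ a, sq]
  rw [hcfc]
  exact norm_cfc_le (by positivity) fun t _ => abs_unitClamp_sub_sub_unitClampRegQuot_le hε t

namespace TwoSidedIdeal

variable {I : TwoSidedIdeal A}

lemma mul_cfc_unitClamp_sub_mem (hI : IsClosed (I : Set A)) {h a : A} (ha : IsSelfAdjoint a)
    (hcomm : h * a - a * h ∈ I) (hsq : h * (a * a - 1) ∈ I) : h * (cfc unitClamp a - a) ∈ I := by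
  have hclosed : IsClosed {x : A | h * x ∈ I} := hI.preimage (by fun_prop)
  suffices hmem : cfc unitClamp a - a ∈ closure {x : A | h * x ∈ I} from
    hclosed.closure_subset hmem
  refine Metric.mem_closure_iff.2 fun ε hε =>
    ⟨cfc (unitClampRegQuot ε) a * (a * a - 1), ?_, ?_⟩
  · have hq := cfc_mem_of_isClosed (I.isClosed_essentialCommutant ℝ hI h) ha hcomm
      (unitClampRegQuot ε)
    rw [mem_essentialCommutant] at hq
    change h * (cfc (unitClampRegQuot ε) a * (a * a - 1)) ∈ I
    rw [show ∀ q b : A, h * (q * b) = (h * q - q * h) * b + q * (h * b) by intros; noncomm_ring]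
    exact I.add_mem (I.mul_mem_right _ _ hq) (I.mul_mem_left _ _ hsq)
  · rw [dist_eq_norm]
    linarith [norm_cfc_unitClamp_sub_sub_le ha hε]

lemma cfc_unitClamp_half_add_star_mem (hI : IsClosed (I : Set A)) {h f : A}
    (hf : h * f - f * h ∈ I) (hf_star : h * star f - star f * h ∈ I) (hff : h * (f * f - 1) ∈ I)
    (hf_sub : h * (star f - f) ∈ I) :
    let c := cfc unitClamp ((2 : ℂ)⁻¹ • (f + star f))
    h * (c - f) ∈ I ∧ h * (c * c - 1) ∈ I ∧ h * c - c * h ∈ I := by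
  set a : A := (2 : ℂ)⁻¹ • (f + star f)
  have ha : IsSelfAdjoint a := IsSelfAdjoint.smul (R := ℂ) (by simp) (.add_star_self f)
  have hcomm : a ∈ I.essentialCommutant ℂ h :=
    Subalgebra.smul_mem _ (Subalgebra.add_mem _ hf hf_star) _
  have haf : h * (a - f) ∈ I := by
    rw [show a - f = (2 : ℂ)⁻¹ • (star f - f) by module, mul_smul_comm, Algebra.smul_def]
    exact I.mul_mem_left _ _ hf_sub
  have hsq : h * (a * a - 1) ∈ I := I.mul_mul_self_sub_one_mem hf haf hff
  have hca : h * (cfc unitClamp a - a) ∈ I := mul_cfc_unitClamp_sub_mem hI ha hcomm hsq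
  have hcf : h * (cfc unitClamp a - f) ∈ I := by
    rw [← sub_add_sub_cancel _ a, mul_add]
    exact I.add_mem hca haf
  exact ⟨hcf, I.mul_mul_self_sub_one_mem hcomm hca hsq,
    cfc_mem_of_isClosed (I.isClosed_essentialCommutant ℝ hI h) ha hcomm unitClamp⟩

end TwoSidedIdeal

end CStarAlgebra

section CompactOperators

variable (𝕜 E : Type*) [NontriviallyNormedField 𝕜] [NormedAddCommGroup E] [NormedSpace 𝕜 E]

def compactOperatorIdeal : TwoSidedIdeal (E →L[𝕜] E) :=
  .mk' {T | IsCompactOperator T} isCompactOperator_zero .add .neg (·.clm_comp _) (·.comp_clm _)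

variable {𝕜 E}

lemma mem_compactOperatorIdeal {T : E →L[𝕜] E} :
    T ∈ compactOperatorIdeal 𝕜 E ↔ IsCompactOperator T :=
  TwoSidedIdeal.mem_mk' ..

lemma isClosed_compactOperatorIdeal [CompleteSpace E] :
    IsClosed (compactOperatorIdeal 𝕜 E : Set (E →L[𝕜] E)) := by
  have hcoe : (compactOperatorIdeal 𝕜 E : Set (E →L[𝕜] E)) =
      {T : E →L[𝕜] E | IsCompactOperator T} :=
    Set.ext fun _ => mem_compactOperatorIdeal
  exact hcoe ▸ isClosed_setOfPred_isCompactOperator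

end CompactOperators

theorem stmt16
    {H : Type*} [NormedAddCommGroup H] [InnerProductSpace ℂ H] [CompleteSpace H]
    (F H₀ : H →L[ℂ] H)
    (h1 : IsCompactOperator (H₀ * F - F * H₀ : H →L[ℂ] H))
    (h2 : IsCompactOperator (H₀ * star F - star F * H₀ : H →L[ℂ] H))
    (h3 : IsCompactOperator (H₀ * (F * F - 1) : H →L[ℂ] H))
    (h4 : IsCompactOperator (H₀ * (star F - F) : H →L[ℂ] H)) :
    IsCompactOperator
        (H₀ * (cfc (fun t : ℝ => max (-1) (min t 1)) ((2 : ℂ)⁻¹ • (F + star F)) - F)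
          : H →L[ℂ] H) ∧
    IsCompactOperator
        (H₀ * (cfc (fun t : ℝ => max (-1) (min t 1)) ((2 : ℂ)⁻¹ • (F + star F)) *
            cfc (fun t : ℝ => max (-1) (min t 1)) ((2 : ℂ)⁻¹ • (F + star F)) - 1)
          : H →L[ℂ] H) ∧
    IsCompactOperator
        (H₀ * cfc (fun t : ℝ => max (-1) (min t 1)) ((2 : ℂ)⁻¹ • (F + star F)) -
            cfc (fun t : ℝ => max (-1) (min t 1)) ((2 : ℂ)⁻¹ • (F + star F)) * H₀
          : H →L[ℂ] H) := by
  simp only [← mem_compactOperatorIdeal (𝕜 := ℂ)] at h1 h2 h3 h4 ⊢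
  exact (compactOperatorIdeal ℂ H).cfc_unitClamp_half_add_star_mem isClosed_compactOperatorIdeal
    h1 h2 h3 h4
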